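/- arXiv:2106.11426 — 2 statements merged into one kernel-verified Lean document; each statement's English description precedes it below -/
import Mathlib

section
/- Let (Ω, ℱ, P) be a probability space, let n be a positive integer, let α₁, …, αₙ be nonnegative real numbers, and let A₁, …, Aₙ ∈ ℱ be events with P(Aᵢ) = pᵢ for each i. Then the random variable Z = Σᵢ₌₁ⁿ αᵢ·1_{Aᵢ} satisfies Var(Z) ≤ (Σᵢ₌₁ⁿ αᵢ·√pᵢ)². (This is the variance part of Theorem 1: the value stored in one row of the Representer Sketch at the query's cell has variance at most (Σᵢ αᵢ √K(xᵢ,q))².) -/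
/-!
Since `Var[Z] ≤ 𝔼[Z²]`, it suffices to bound the second moment. Expanding the square,
`𝔼[Z²] = ∑ᵢ ∑ⱼ αᵢ αⱼ P(Aᵢ ∩ Aⱼ)`, and `P(Aᵢ ∩ Aⱼ) ≤ min(pᵢ, pⱼ) ≤ √pᵢ √pⱼ`; with nonnegative
weights the double sum is then at most `(∑ᵢ αᵢ √pᵢ)²`.
-/

open MeasureTheory ProbabilityTheory Finset

section
variable {Ω ι : Type*} [MeasurableSpace Ω] {μ : Measure Ω} [IsFiniteMeasure μ]

lemma measureReal_inter_le_sqrt_mul_sqrt (s t : Set Ω) :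
    μ.real (s ∩ t) ≤ √(μ.real s) * √(μ.real t) := by
  rw [← Real.sqrt_mul measureReal_nonneg, Real.le_sqrt measureReal_nonneg
    (mul_nonneg measureReal_nonneg measureReal_nonneg), sq]
  exact mul_le_mul (measureReal_mono Set.inter_subset_left)
    (measureReal_mono Set.inter_subset_right) measureReal_nonneg measureReal_nonneg

lemma integral_sq_sum_mul_indicator (s : Finset ι) (a : ι → ℝ) {A : ι → Set Ω}
    (hA : ∀ i, MeasurableSet (A i)) :
    ∫ ω, (∑ i ∈ s, a i * (A i).indicator 1 ω) ^ 2 ∂μ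
      = ∑ i ∈ s, ∑ j ∈ s, a i * a j * μ.real (A i ∩ A j) := by
  have hsq : ∀ ω, (∑ i ∈ s, a i * (A i).indicator 1 ω) ^ 2
      = ∑ i ∈ s, ∑ j ∈ s, a i * a j * (A i ∩ A j).indicator 1 ω := fun ω => by
    simp only [sq, sum_mul_sum, Set.inter_indicator_one, Pi.mul_apply]
    exact sum_congr rfl fun i _ => sum_congr rfl fun j _ => by ring
  have hint : ∀ i j, Integrable (fun ω => a i * a j * (A i ∩ A j).indicator 1 ω) μ :=
    fun i j => ((integrable_const 1).indicator ((hA i).inter (hA j))).const_mul _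
  simp_rw [hsq]
  rw [integral_finsetSum _ fun i _ => integrable_finsetSum _ fun j _ => hint i j]
  refine sum_congr rfl fun i _ => ?_
  rw [integral_finsetSum _ fun j _ => hint i j]
  refine sum_congr rfl fun j _ => ?_
  rw [integral_const_mul, integral_indicator_one ((hA i).inter (hA j))]

lemma integral_sq_sum_mul_indicator_le (s : Finset ι) {a : ι → ℝ} (ha : ∀ i ∈ s, 0 ≤ a i)
    {A : ι → Set Ω} (hA : ∀ i, MeasurableSet (A i)) :
    ∫ ω, (∑ i ∈ s, a i * (A i).indicator 1 ω) ^ 2 ∂μ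
      ≤ (∑ i ∈ s, a i * √(μ.real (A i))) ^ 2 := by
  rw [integral_sq_sum_mul_indicator s a hA, sq, sum_mul_sum]
  refine sum_le_sum fun i hi => sum_le_sum fun j hj => ?_
  calc a i * a j * μ.real (A i ∩ A j)
      ≤ a i * a j * (√(μ.real (A i)) * √(μ.real (A j))) :=
        mul_le_mul_of_nonneg_left (measureReal_inter_le_sqrt_mul_sqrt _ _)
          (mul_nonneg (ha i hi) (ha j hj))
    _ = a i * √(μ.real (A i)) * (a j * √(μ.real (A j))) := by ring

end

theorem sketch_estimator_variance_general
    {Ω : Type*} [MeasurableSpace Ω] (P : Measure Ω) [IsProbabilityMeasure P]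
    (n : ℕ) (α p : Fin n → ℝ) (hα : ∀ i, 0 ≤ α i)
    (A : Fin n → Set Ω) (hA : ∀ i, MeasurableSet (A i))
    (hp : ∀ i, (P (A i)).toReal = p i)
    (Z : Ω → ℝ)
    (hZ : ∀ ω, Z ω = ∑ i, α i * (A i).indicator (fun _ => (1 : ℝ)) ω) :
    variance Z P ≤ (∑ i, α i * Real.sqrt (p i)) ^ 2 := by
  have hZ_meas : Measurable Z := by
    rw [funext hZ]
    exact Finset.measurable_sum _ fun i _ => (measurable_one.indicator (hA i)).const_mul _
  calc variance Z P ≤ P[Z ^ 2] := variance_le_expectation_sq hZ_meas.aestronglyMeasurable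
    _ ≤ (∑ i, α i * √(P.real (A i))) ^ 2 := by
        simp only [Pi.pow_apply, hZ]
        exact integral_sq_sum_mul_indicator_le _ (fun i _ => hα i) hA
    _ = (∑ i, α i * Real.sqrt (p i)) ^ 2 := by simp only [measureReal_def, hp]

/-- **Variance part of Theorem 1 (Sketch Estimator).**
The value stored by one row of the Representer Sketch at the query's cell,
`Z = ∑ i, αᵢ · 1_{Aᵢ}` with nonnegative weights `αᵢ`, where `Aᵢ` is the collision
event with probability `pᵢ = K(xᵢ, q)`, satisfies
`Var(Z) ≤ (∑ i, αᵢ · √pᵢ)²`. -/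
theorem sketch_estimator_variance
    {Ω : Type*} [MeasurableSpace Ω] (P : Measure Ω) [IsProbabilityMeasure P]
    (n : ℕ) (hn : 0 < n) (α p : Fin n → ℝ) (hα : ∀ i, 0 ≤ α i)
    (A : Fin n → Set Ω) (hA : ∀ i, MeasurableSet (A i))
    (hp : ∀ i, (P (A i)).toReal = p i)
    (Z : Ω → ℝ)
    (hZ : ∀ ω, Z ω = ∑ i, α i * (A i).indicator (fun _ => (1 : ℝ)) ω) :
    variance Z P ≤ (∑ i, α i * Real.sqrt (p i)) ^ 2 :=
  sketch_estimator_variance_general P n α p hα A hA hp Z hZ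
end

section
/- Let (Ω, ℱ, P) be a probability space, let n be a positive integer, let α₁, …, αₙ be nonnegative reals and p₁, …, pₙ ∈ [0,1]. For each l = 1, …, L let Z_l = Σᵢ₌₁ⁿ αᵢ·1_{A_{i,l}}, where for each l the events A_{1,l}, …, A_{n,l} satisfy P(A_{i,l}) = pᵢ, and the σ-algebras generated by the families (A_{i,l})ᵢ for distinct l are mutually independent, so that Z₁, …, Z_L are i.i.d. Let δ ∈ (0,1), suppose 8·log(1/δ) is a positive integer, set g = 8·log(1/δ), and suppose L = g·m for a positive integer m. Let Z(q) be the median-of-means estimate obtained by partitioning Z₁,…,Z_L into g groups of m, averaging within each group, and taking a median of the g group means. Then with probability at least 1 − δ, |Z(q) − Σᵢ₌₁ⁿ αᵢ·pᵢ| ≤ 6·((Σᵢ₌₁ⁿ αᵢ·√pᵢ)/√L)·√(log(1/δ)). (This is Theorem 2: the median-of-means query of a Representer Sketch with L rows, where pᵢ = K(xᵢ,q), estimates the weighted KDE f_K(q) = Σᵢ αᵢ K(xᵢ,q) with error at most 6·f̃_K(q)·√(log(1/δ))/√L, where f̃_K(q) = Σᵢ αᵢ √K(xᵢ,q).) -/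
open MeasureTheory ProbabilityTheory

/-- **Theorem 2 (Weighted-KDE Estimation Error).**
Each row `l` of the Representer Sketch stores at the query's cell the value
`Z_l = ∑ i, αᵢ · 1_{A_{i,l}}`, where `A_{i,l}` is the collision event of row `l`
with probability `pᵢ = K(xᵢ, q)`; the rows are mutually independent (the σ-algebras
generated by the event families of distinct rows are independent), so the `Z_l`
are i.i.d.  The median-of-means estimate `Z(q)` over `g = 8·log(1/δ)` groups of
`m = L/g` rows satisfies, with probability at least `1 − δ`,
`|Z(q) − ∑ i, αᵢ pᵢ| ≤ 6·((∑ i, αᵢ √pᵢ)/√L)·√(log(1/δ))`. -/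
theorem weighted_kde_estimation_error
    {Ω : Type*} [MeasurableSpace Ω] (P : Measure Ω) [IsProbabilityMeasure P]
    (n : ℕ) (hn : 0 < n) (α p : Fin n → ℝ)
    (hα : ∀ i, 0 ≤ α i) (hp01 : ∀ i, p i ∈ Set.Icc (0 : ℝ) 1)
    (L g m : ℕ) (hg : 0 < g) (hm : 0 < m) (hL : L = g * m)
    (δ : ℝ) (hδ : δ ∈ Set.Ioo (0 : ℝ) 1)
    (hgδ : (g : ℝ) = 8 * Real.log (1 / δ))
    (A : Fin n → Fin L → Set Ω)
    (hAmeas : ∀ i l, MeasurableSet (A i l))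
    (hApr : ∀ i l, (P (A i l)).toReal = p i)
    (hindep : iIndep (fun l : Fin L =>
      MeasurableSpace.generateFrom {s : Set Ω | ∃ i : Fin n, s = A i l}) P)
    (Z : Fin L → Ω → ℝ)
    (hZ : ∀ (l : Fin L) (ω : Ω),
      Z l ω = ∑ i, α i * (A i l).indicator (fun _ => (1 : ℝ)) ω)
    (hident : ∀ l l', P.map (Z l) = P.map (Z l'))
    (Y : Fin g → Ω → ℝ)
    (hY : ∀ (j : Fin g) (ω : Ω),
      Y j ω = (m : ℝ)⁻¹ * ∑ k : Fin m,
        Z ⟨j.1 * m + k.1, by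
          have hj := j.2; have hk := k.2
          calc j.1 * m + k.1 < j.1 * m + m := by omega
            _ = (j.1 + 1) * m := by ring
            _ ≤ g * m := Nat.mul_le_mul_right m hj
            _ = L := hL.symm⟩ ω)
    (Zq : Ω → ℝ)
    (hmed_le : ∀ ω : Ω, g ≤ 2 * (Finset.univ.filter fun j => Y j ω ≤ Zq ω).card)
    (hmed_ge : ∀ ω : Ω, g ≤ 2 * (Finset.univ.filter fun j => Zq ω ≤ Y j ω).card) :
    ENNReal.ofReal (1 - δ) ≤
      P {ω | |Zq ω - ∑ i, α i * p i| ≤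
        6 * ((∑ i, α i * Real.sqrt (p i)) / Real.sqrt L) *
          Real.sqrt (Real.log (1 / δ))} := by
  classical
  set c : ℝ := ∑ i, α i * p i with hc
  set S : ℝ := ∑ i, α i * Real.sqrt (p i) with hSdef
  set t : ℝ := 6 * (S / Real.sqrt L) * Real.sqrt (Real.log (1 / δ)) with htdef
  -- basic positivity facts
  have hδ0 : 0 < δ := hδ.1
  have hδ1 : δ < 1 := hδ.2
  have hlogpos : 0 < Real.log (1 / δ) := by
    apply Real.log_pos
    rw [lt_div_iff₀ hδ0]; linarith
  have hgR : (0:ℝ) < g := by exact_mod_cast hg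
  have hmR : (0:ℝ) < m := by exact_mod_cast hm
  have hLpos : 0 < L := by rw [hL]; exact Nat.mul_pos hg hm
  have hLR : (0:ℝ) < L := by exact_mod_cast hLpos
  have hSnonneg : 0 ≤ S := Finset.sum_nonneg fun i _ =>
    mul_nonneg (hα i) (Real.sqrt_nonneg _)
  have htnonneg : 0 ≤ t := by
    apply mul_nonneg (mul_nonneg (by norm_num) _) (Real.sqrt_nonneg _)
    exact div_nonneg hSnonneg (Real.sqrt_nonneg _)
  -- σ-algebras
  set mS : Fin L → MeasurableSpace Ω :=
    fun l => MeasurableSpace.generateFrom {s : Set Ω | ∃ i : Fin n, s = A i l} with hmS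
  have h_le : ∀ l, mS l ≤ ‹MeasurableSpace Ω› := by
    intro l
    apply MeasurableSpace.generateFrom_le
    rintro s ⟨i, rfl⟩
    exact hAmeas i l
  have hAm : ∀ i l, MeasurableSet[mS l] (A i l) :=
    fun i l => MeasurableSpace.measurableSet_generateFrom ⟨i, rfl⟩
  -- the index map
  have hidxlt : ∀ (j : Fin g) (k : Fin m), j.1 * m + k.1 < L := by
    intro j k
    have hj := j.2; have hk := k.2
    calc j.1 * m + k.1 < j.1 * m + m := by omega
      _ = (j.1 + 1) * m := by ring
      _ ≤ g * m := Nat.mul_le_mul_right m hj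
      _ = L := hL.symm
  set idx : Fin g → Fin m → Fin L := fun j k => ⟨j.1 * m + k.1, hidxlt j k⟩ with hidx
  have hYidx : ∀ (j : Fin g) (ω : Ω), Y j ω = (m : ℝ)⁻¹ * ∑ k : Fin m, Z (idx j k) ω :=
    fun j ω => hY j ω
  have hidx_ne : ∀ (j : Fin g) (k k' : Fin m), k ≠ k' → idx j k ≠ idx j k' := by
    intro j k k' hkk' h
    apply hkk'
    have := congrArg Fin.val h
    simp only [idx] at this
    exact Fin.ext (by omega)
  -- centered indicators
  set W : Fin n → Fin L → Ω → ℝ :=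
    fun i l ω => (A i l).indicator (fun _ => (1:ℝ)) ω - p i with hW
  have ind_int : ∀ (s : Set Ω), MeasurableSet s →
      Integrable (s.indicator fun _ => (1:ℝ)) P :=
    fun s hs => (integrable_const (1:ℝ)).indicator hs
  have hWeq : ∀ i l i' l' (ω : Ω), W i l ω * W i' l' ω =
      (A i l ∩ A i' l').indicator (fun _ => (1:ℝ)) ω
        - p i' * (A i l).indicator (fun _ => (1:ℝ)) ω
        - p i * (A i' l').indicator (fun _ => (1:ℝ)) ω
        + p i * p i' := by
    intro i l i' l' ω
    simp only [W]
    by_cases h1 : ω ∈ A i l <;> by_cases h2 : ω ∈ A i' l' <;>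
      simp [Set.indicator_of_mem, Set.indicator_of_notMem, Set.mem_inter_iff, h1, h2] <;> ring
  have hWint : ∀ i l i' l', Integrable (fun ω => W i l ω * W i' l' ω) P := by
    intro i l i' l'
    rw [show (fun ω => W i l ω * W i' l' ω) = fun ω =>
      (A i l ∩ A i' l').indicator (fun _ => (1:ℝ)) ω
        - p i' * (A i l).indicator (fun _ => (1:ℝ)) ω
        - p i * (A i' l').indicator (fun _ => (1:ℝ)) ω
        + p i * p i' from funext (hWeq i l i' l')]
    exact (((ind_int _ ((hAmeas i l).inter (hAmeas i' l'))).sub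
      ((ind_int _ (hAmeas i l)).const_mul _)).sub
      ((ind_int _ (hAmeas i' l')).const_mul _)).add (integrable_const _)
  have hWval : ∀ i l i' l', ∫ ω, W i l ω * W i' l' ω ∂P =
      (P (A i l ∩ A i' l')).toReal - p i * p i' := by
    intro i l i' l'
    rw [show (fun ω => W i l ω * W i' l' ω) = fun ω =>
      (A i l ∩ A i' l').indicator (fun _ => (1:ℝ)) ω
        - p i' * (A i l).indicator (fun _ => (1:ℝ)) ω
        - p i * (A i' l').indicator (fun _ => (1:ℝ)) ω
        + p i * p i' from funext (hWeq i l i' l')]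
    have I1 := ind_int _ ((hAmeas i l).inter (hAmeas i' l'))
    have I2 := (ind_int _ (hAmeas i l)).const_mul (p i')
    have I3 := (ind_int _ (hAmeas i' l')).const_mul (p i)
    have I12 : Integrable (fun ω => (A i l ∩ A i' l').indicator (fun _ => (1:ℝ)) ω
        - p i' * (A i l).indicator (fun _ => (1:ℝ)) ω) P := I1.sub I2
    have I123 : Integrable (fun ω => (A i l ∩ A i' l').indicator (fun _ => (1:ℝ)) ω
        - p i' * (A i l).indicator (fun _ => (1:ℝ)) ω
        - p i * (A i' l').indicator (fun _ => (1:ℝ)) ω) P := I12.sub I3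
    have hind1 : ∀ (s : Set Ω), MeasurableSet s →
        ∫ ω, s.indicator (fun _ => (1:ℝ)) ω ∂P = (P s).toReal :=
      fun s hs => integral_indicator_one hs
    rw [integral_add I123 (integrable_const _),
      integral_sub I12 I3, integral_sub I1 I2,
      integral_const_mul, integral_const_mul,
      hind1 _ ((hAmeas i l).inter (hAmeas i' l')),
      hind1 _ (hAmeas i l),
      hind1 _ (hAmeas i' l'), hApr, hApr, integral_const]
    simp only [measure_univ, probReal_univ, ENNReal.toReal_one, smul_eq_mul, one_mul]
    ring
  -- cross-row events are independent
  have hcross : ∀ (i : Fin n) (l : Fin L) (i' : Fin n) (l' : Fin L), l ≠ l' →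
      (P (A i l ∩ A i' l')).toReal = p i * p i' := by
    intro i l i' l' hne
    have hI : Indep (mS l) (mS l') P := hindep.indep hne
    have := (Indep_iff _ _ _).mp hI (A i l) (A i' l') (hAm i l) (hAm i' l')
    rw [this, ENNReal.toReal_mul, hApr, hApr]
  -- centered Z
  have hZc : ∀ (l : Fin L) (ω : Ω), Z l ω - c = ∑ i, α i * W i l ω := by
    intro l ω
    simp only [W, mul_sub, Finset.sum_sub_distrib, hZ l ω, hc]
  -- products of centered Z's
  have hVint : ∀ (l l' : Fin L),
      Integrable (fun ω => (Z l ω - c) * (Z l' ω - c)) P := by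
    intro l l'
    have : (fun ω => (Z l ω - c) * (Z l' ω - c)) =
        fun ω => ∑ i, ∑ i', α i * α i' * (W i l ω * W i' l' ω) := by
      funext ω
      rw [hZc l ω, hZc l' ω, Finset.sum_mul_sum]
      exact Finset.sum_congr rfl fun i _ => Finset.sum_congr rfl fun i' _ => by ring
    rw [this]
    exact integrable_finset_sum _ fun i _ =>
      integrable_finset_sum _ fun i' _ => (hWint i l i' l').const_mul _
  have hVval : ∀ (l l' : Fin L),
      ∫ ω, (Z l ω - c) * (Z l' ω - c) ∂P =
        ∑ i, ∑ i', α i * α i' * ((P (A i l ∩ A i' l')).toReal - p i * p i') := by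
    intro l l'
    have heq : (fun ω => (Z l ω - c) * (Z l' ω - c)) =
        fun ω => ∑ i, ∑ i', α i * α i' * (W i l ω * W i' l' ω) := by
      funext ω
      rw [hZc l ω, hZc l' ω, Finset.sum_mul_sum]
      exact Finset.sum_congr rfl fun i _ => Finset.sum_congr rfl fun i' _ => by ring
    rw [heq, integral_finset_sum _ fun i _ =>
      integrable_finset_sum _ fun i' _ => (hWint i l i' l').const_mul _]
    refine Finset.sum_congr rfl fun i _ => ?_
    rw [integral_finset_sum _ fun i' _ => (hWint i l i' l').const_mul _]
    refine Finset.sum_congr rfl fun i' _ => ?_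
    rw [integral_const_mul, hWval]
  -- diagonal bound and off-diagonal vanishing
  have hVV_ne : ∀ (l l' : Fin L), l ≠ l' →
      ∫ ω, (Z l ω - c) * (Z l' ω - c) ∂P = 0 := by
    intro l l' hne
    rw [hVval]
    refine Finset.sum_eq_zero fun i _ => Finset.sum_eq_zero fun i' _ => ?_
    rw [hcross i l i' l' hne]; ring
  have hVV_self : ∀ l : Fin L, ∫ ω, (Z l ω - c) * (Z l ω - c) ∂P ≤ S ^ 2 := by
    intro l
    rw [hVval]
    have hS2 : S ^ 2 = ∑ i, ∑ i', α i * α i' *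
        (Real.sqrt (p i) * Real.sqrt (p i')) := by
      rw [sq, hSdef, Finset.sum_mul_sum]
      exact Finset.sum_congr rfl fun i _ => Finset.sum_congr rfl fun i' _ => by ring
    rw [hS2]
    refine Finset.sum_le_sum fun i _ => Finset.sum_le_sum fun i' _ => ?_
    refine mul_le_mul_of_nonneg_left ?_ (mul_nonneg (hα i) (hα i'))
    have h1 : (P (A i l ∩ A i' l)).toReal ≤ Real.sqrt (p i) * Real.sqrt (p i') := by
      have hmin : (P (A i l ∩ A i' l)).toReal ≤ min (p i) (p i') := by
        refine le_min ?_ ?_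
        · rw [← hApr i l]
          exact ENNReal.toReal_mono (measure_ne_top _ _)
            (measure_mono Set.inter_subset_left)
        · rw [← hApr i' l]
          exact ENNReal.toReal_mono (measure_ne_top _ _)
            (measure_mono Set.inter_subset_right)
      refine hmin.trans ?_
      rcases le_total (p i) (p i') with h | h
      · rw [min_eq_left h]
        nth_rewrite 1 [← Real.mul_self_sqrt (hp01 i).1]
        exact mul_le_mul_of_nonneg_left (Real.sqrt_le_sqrt h) (Real.sqrt_nonneg _)
      · rw [min_eq_right h]
        nth_rewrite 1 [← Real.mul_self_sqrt (hp01 i').1]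
        exact mul_le_mul_of_nonneg_right (Real.sqrt_le_sqrt h) (Real.sqrt_nonneg _)
    have h2 : 0 ≤ p i * p i' := mul_nonneg (hp01 i).1 (hp01 i').1
    linarith
  -- pointwise expansion of (Y j - c)^2
  have hYc : ∀ (j : Fin g) (ω : Ω),
      Y j ω - c = (m : ℝ)⁻¹ * ∑ k : Fin m, (Z (idx j k) ω - c) := by
    intro j ω
    rw [hYidx j ω, Finset.sum_sub_distrib, Finset.sum_const, Finset.card_univ,
      Fintype.card_fin, nsmul_eq_mul, mul_sub, inv_mul_cancel_left₀ (ne_of_gt hmR)]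
  have hYsq : ∀ (j : Fin g) (ω : Ω),
      (Y j ω - c) ^ 2 = (m : ℝ)⁻¹ * (m : ℝ)⁻¹ *
        ∑ k : Fin m, ∑ k' : Fin m, (Z (idx j k) ω - c) * (Z (idx j k') ω - c) := by
    intro j ω
    rw [hYc j ω, ← Finset.sum_mul_sum]
    ring
  have hYint : ∀ j : Fin g, Integrable (fun ω => (Y j ω - c) ^ 2) P := by
    intro j
    rw [show (fun ω => (Y j ω - c) ^ 2) = fun ω => (m : ℝ)⁻¹ * (m : ℝ)⁻¹ *
        ∑ k : Fin m, ∑ k' : Fin m, (Z (idx j k) ω - c) * (Z (idx j k') ω - c)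
      from funext (hYsq j)]
    exact (integrable_finset_sum _ fun k _ =>
      integrable_finset_sum _ fun k' _ => hVint _ _).const_mul _
  have hYvar : ∀ j : Fin g, ∫ ω, (Y j ω - c) ^ 2 ∂P ≤ S ^ 2 / m := by
    intro j
    rw [show (fun ω => (Y j ω - c) ^ 2) = fun ω => (m : ℝ)⁻¹ * (m : ℝ)⁻¹ *
        ∑ k : Fin m, ∑ k' : Fin m, (Z (idx j k) ω - c) * (Z (idx j k') ω - c)
      from funext (hYsq j)]
    rw [integral_const_mul, integral_finset_sum _ fun k _ =>
      integrable_finset_sum _ fun k' _ => hVint _ _]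
    have hin : ∀ k : Fin m,
        (∑ k' : Fin m, ∫ ω, (Z (idx j k) ω - c) * (Z (idx j k') ω - c) ∂P) ≤ S ^ 2 := by
      intro k
      have : ∀ k' : Fin m,
          (∫ ω, (Z (idx j k) ω - c) * (Z (idx j k') ω - c) ∂P) =
          if k' = k then ∫ ω, (Z (idx j k) ω - c) * (Z (idx j k) ω - c) ∂P else 0 := by
        intro k'
        by_cases h : k' = k
        · subst h; simp
        · rw [if_neg h]
          exact hVV_ne _ _ (hidx_ne j k k' (fun he => h he.symm))
      rw [Finset.sum_congr rfl fun k' _ => this k', Finset.sum_ite_eq' Finset.univ k _]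
      simpa using hVV_self (idx j k)
    have hsum : (∑ k : Fin m, ∫ ω, (∑ k' : Fin m,
        (Z (idx j k) ω - c) * (Z (idx j k') ω - c)) ∂P) ≤ m * S ^ 2 := by
      calc (∑ k : Fin m, ∫ ω, (∑ k' : Fin m,
          (Z (idx j k) ω - c) * (Z (idx j k') ω - c)) ∂P)
          = ∑ k : Fin m, ∑ k' : Fin m,
            ∫ ω, (Z (idx j k) ω - c) * (Z (idx j k') ω - c) ∂P := by
            exact Finset.sum_congr rfl fun k _ =>
              integral_finset_sum _ fun k' _ => hVint _ _
        _ ≤ ∑ k : Fin m, S ^ 2 := Finset.sum_le_sum fun k _ => hin k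
        _ = m * S ^ 2 := by
            rw [Finset.sum_const, Finset.card_univ, Fintype.card_fin, nsmul_eq_mul]
    calc (m : ℝ)⁻¹ * (m : ℝ)⁻¹ * ∑ k : Fin m, ∫ ω, (∑ k' : Fin m,
        (Z (idx j k) ω - c) * (Z (idx j k') ω - c)) ∂P
        ≤ (m : ℝ)⁻¹ * (m : ℝ)⁻¹ * (m * S ^ 2) := by
          refine mul_le_mul_of_nonneg_left hsum ?_
          positivity
      _ = S ^ 2 / m := by field_simp
  -- Chebyshev bound for each group mean
  have hq : ∀ j : Fin g, (P {ω | t < |Y j ω - c|}).toReal ≤ 2 / 9 := by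
    intro j
    rcases eq_or_lt_of_le hSnonneg with hS0 | hSpos
    · -- degenerate case S = 0
      have ht0 : t = 0 := by rw [htdef, ← hS0]; ring
      have hint0 : ∫ ω, (Y j ω - c) ^ 2 ∂P = 0 := by
        refine le_antisymm ?_ (integral_nonneg fun ω => sq_nonneg _)
        calc ∫ ω, (Y j ω - c) ^ 2 ∂P ≤ S ^ 2 / m := hYvar j
          _ = 0 := by rw [← hS0]; simp
      have hae : (fun ω => (Y j ω - c) ^ 2) =ᵐ[P] 0 :=
        (integral_eq_zero_iff_of_nonneg (fun ω => sq_nonneg _) (hYint j)).mp hint0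
      have hnull : P {ω | ¬ ((Y j ω - c) ^ 2 = 0)} = 0 := by
        have := hae
        rw [Filter.EventuallyEq, ae_iff] at this
        simpa using this
      have hsub : {ω | t < |Y j ω - c|} ⊆ {ω | ¬ ((Y j ω - c) ^ 2 = 0)} := by
        intro ω hω
        simp only [Set.mem_setOf_eq, ht0] at hω ⊢
        intro habs
        have : Y j ω - c = 0 := by
          have := sq_eq_zero_iff.mp habs; exact this
        rw [this] at hω; simp at hω
      have : P {ω | t < |Y j ω - c|} = 0 := measure_mono_null hsub hnull
      rw [this]; norm_num
    · -- main case S > 0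
      have htpos : 0 < t := by
        rw [htdef]
        have h1 : 0 < S / Real.sqrt L := div_pos hSpos (Real.sqrt_pos.mpr hLR)
        have h2 : 0 < Real.sqrt (Real.log (1 / δ)) := Real.sqrt_pos.mpr hlogpos
        positivity
      have ht2 : t ^ 2 = (9 / 2) * (S ^ 2 / m) := by
        have hlog : Real.log (1 / δ) = g / 8 := by rw [hgδ]; ring
        have hLgm : (L : ℝ) = (g : ℝ) * m := by exact_mod_cast congrArg Nat.cast hL
        rw [htdef]
        rw [mul_pow, mul_pow, div_pow, Real.sq_sqrt hLR.le, Real.sq_sqrt hlogpos.le,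
          hlog, hLgm]
        field_simp
        ring
      have hmarkov := mul_meas_ge_le_integral_of_nonneg
        (Filter.Eventually.of_forall fun ω => sq_nonneg (Y j ω - c)) (hYint j) (t ^ 2)
      have hsub : {ω | t < |Y j ω - c|} ⊆ {ω | t ^ 2 ≤ (Y j ω - c) ^ 2} := by
        intro ω hω
        simp only [Set.mem_setOf_eq] at hω ⊢
        calc t ^ 2 ≤ |Y j ω - c| ^ 2 := by
              exact pow_le_pow_left₀ htnonneg hω.le 2
          _ = (Y j ω - c) ^ 2 := sq_abs _
      have hmono : (P {ω | t < |Y j ω - c|}).toReal ≤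
          (P {ω | t ^ 2 ≤ (Y j ω - c) ^ 2}).toReal :=
        ENNReal.toReal_mono (measure_ne_top _ _) (measure_mono hsub)
      have hSm : 0 < S ^ 2 / m := div_pos (pow_pos hSpos 2) hmR
      have hbound : t ^ 2 * (P {ω | t ^ 2 ≤ (Y j ω - c) ^ 2}).toReal ≤ S ^ 2 / m :=
        hmarkov.trans (hYvar j)
      have h9 : (0:ℝ) < t ^ 2 := pow_pos htpos 2
      have hu : S ^ 2 / m ≠ 0 := ne_of_gt hSm
      have hx2 : (P {ω | t ^ 2 ≤ (Y j ω - c) ^ 2}).toReal ≤ 2 / 9 := by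
        have step : (P {ω | t ^ 2 ≤ (Y j ω - c) ^ 2}).toReal =
            (t ^ 2 * (P {ω | t ^ 2 ≤ (Y j ω - c) ^ 2}).toReal) / t ^ 2 := by
          field_simp
        rw [step]
        calc (t ^ 2 * (P {ω | t ^ 2 ≤ (Y j ω - c) ^ 2}).toReal) / t ^ 2
            ≤ (S ^ 2 / m) / t ^ 2 := by
              gcongr
          _ = 2 / 9 := by
              rw [ht2, mul_comm, div_mul_eq_div_div, div_self hu]; norm_num
      linarith [hmono, hx2]
  -- grouped σ-algebras
  set B : Fin g → Set (Fin L) := fun j => {l | l.1 / m = j.1} with hB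
  set M : Fin g → MeasurableSpace Ω := fun j => ⨆ l ∈ B j, mS l with hM
  have hidxB : ∀ (j : Fin g) (k : Fin m), idx j k ∈ B j := by
    intro j k
    show (j.1 * m + k.1) / m = j.1
    rw [mul_comm, Nat.mul_add_div hm, Nat.div_eq_of_lt k.2, Nat.add_zero]
  have hMle : ∀ j, M j ≤ ‹MeasurableSpace Ω› := fun j => iSup₂_le fun l _ => h_le l
  have hZmeas : ∀ l : Fin L, Measurable[mS l] (Z l) := by
    intro l
    rw [show Z l = fun ω => ∑ i, α i * (A i l).indicator (fun _ => (1:ℝ)) ω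
      from funext (hZ l)]
    exact Finset.measurable_sum _ fun i _ =>
      (((measurable_const (a := (1:ℝ)))).indicator (hAm i l)).const_mul (α i)
  have hYmeasM : ∀ j : Fin g, Measurable[M j] (Y j) := by
    intro j
    rw [show Y j = fun ω => (m : ℝ)⁻¹ * ∑ k : Fin m, Z (idx j k) ω
      from funext (hYidx j)]
    refine Measurable.const_mul ?_ _
    refine Finset.measurable_sum _ fun k _ => ?_
    exact (hZmeas (idx j k)).mono
      (le_iSup₂ (f := fun (l : Fin L) (_ : l ∈ B j) => mS l) (idx j k) (hidxB j k)) le_rfl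
  set C : Fin g → Set Ω := fun j => {ω | t < |Y j ω - c|} with hC
  have hCmeasM : ∀ j, MeasurableSet[M j] (C j) := by
    intro j
    have hset : MeasurableSet {x : ℝ | t < |x - c|} := by
      have hx : Measurable fun x : ℝ => |x - c| := (measurable_id.sub_const c).abs
      exact hx measurableSet_Ioi
    exact hYmeasM j hset
  have hCmeas : ∀ j, MeasurableSet (C j) := fun j => hMle j _ (hCmeasM j)
  -- the product formula over groups
  have hprod : ∀ (F : Finset (Fin g)) (D : Fin g → Set Ω),
      (∀ j, MeasurableSet[M j] (D j)) →
      P (⋂ j ∈ F, D j) = ∏ j ∈ F, P (D j) := by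
    intro F
    induction F using Finset.induction_on with
    | empty => intro D hD; simp
    | @insert a F haF ih =>
      intro D hD
      have hdisj : Disjoint (B a) (⋃ j ∈ (F : Set (Fin g)), B j) := by
        rw [Set.disjoint_left]
        rintro l hla hlF
        rcases Set.mem_iUnion₂.mp hlF with ⟨j, hj, hlj⟩
        have : a = j := Fin.ext (by rw [← hla, ← hlj])
        exact haF (this ▸ hj)
      have hI : Indep (⨆ l ∈ B a, mS l)
          (⨆ l ∈ ⋃ j ∈ (F : Set (Fin g)), B j, mS l) P :=
        indep_iSup_of_disjoint h_le hindep hdisj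
      have hle2 : ∀ j ∈ F, M j ≤ ⨆ l ∈ ⋃ j ∈ (F : Set (Fin g)), B j, mS l := by
        intro j hj
        refine iSup₂_le fun l hl => ?_
        exact le_iSup₂ (f := fun (l : Fin L)
          (_ : l ∈ ⋃ j ∈ (F : Set (Fin g)), B j) => mS l) l
          (Set.mem_biUnion hj hl)
      have hmeas2 : MeasurableSet[⨆ l ∈ ⋃ j ∈ (F : Set (Fin g)), B j, mS l]
          (⋂ j ∈ F, D j) := by
        refine MeasurableSet.biInter F.countable_toSet fun j hj => ?_
        exact hle2 j hj _ (hD j)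
      rw [Finset.set_biInter_insert, Finset.prod_insert haF, ← ih D hD]
      exact (Indep_iff _ _ _).mp hI _ _ (hD a) hmeas2
  -- the measure of each atom
  set q : Fin g → ℝ := fun j => (P (C j)).toReal with hqdef
  have hq0 : ∀ j, 0 ≤ q j := fun j => ENNReal.toReal_nonneg
  have hq29 : ∀ j, q j ≤ 2 / 9 := fun j => hq j
  have hq1 : ∀ j, q j ≤ 1 := fun j => (hq29 j).trans (by norm_num)
  set Atom : Finset (Fin g) → Set Ω :=
    fun s => ⋂ j ∈ (Finset.univ : Finset (Fin g)),
      (if j ∈ s then C j else (C j)ᶜ) with hAtomdef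
  set 𝒮 : Finset (Finset (Fin g)) :=
    Finset.univ.filter (fun s => g ≤ 2 * s.card) with h𝒮
  have hAtomP : ∀ s : Finset (Fin g), P (Atom s) =
      ENNReal.ofReal (∏ j, (if j ∈ s then q j else 1 - q j)) := by
    intro s
    have hDmeas : ∀ j, MeasurableSet[M j] (if j ∈ s then C j else (C j)ᶜ) := by
      intro j
      by_cases h : j ∈ s
      · rw [if_pos h]; exact hCmeasM j
      · rw [if_neg h]; exact (hCmeasM j).compl
    rw [hAtomdef]
    rw [hprod Finset.univ _ hDmeas]
    rw [ENNReal.ofReal_prod_of_nonneg (fun j _ => by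
      by_cases h : j ∈ s
      · rw [if_pos h]; exact hq0 j
      · rw [if_neg h]; linarith [hq1 j])]
    refine Finset.prod_congr rfl fun j _ => ?_
    by_cases h : j ∈ s
    · rw [if_pos h, if_pos h, ENNReal.ofReal_toReal (measure_ne_top _ _)]
    · rw [if_neg h, if_neg h, prob_compl_eq_one_sub (hCmeas j),
        ENNReal.ofReal_sub 1 (hq0 j), ENNReal.ofReal_one,
        ENNReal.ofReal_toReal (measure_ne_top _ _)]
  -- the real combinatorial bound
  have hreal : (∑ s ∈ 𝒮, ∏ j, (if j ∈ s then q j else 1 - q j)) ≤ δ := by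
    have hfac_nonneg : ∀ (s : Finset (Fin g)) (j : Fin g),
        0 ≤ (if j ∈ s then (9/4 : ℝ) * q j else 1 - q j) := by
      intro s j
      by_cases h : j ∈ s
      · rw [if_pos h]; positivity
      · rw [if_neg h]; linarith [hq1 j]
    have step1 : ∀ s ∈ 𝒮, (∏ j, (if j ∈ s then q j else 1 - q j)) ≤
        (2/3 : ℝ) ^ g * ∏ j, (if j ∈ s then (9/4 : ℝ) * q j else 1 - q j) := by
      intro s hs
      have hcard : g ≤ 2 * s.card := (Finset.mem_filter.mp hs).2
      have hsplit : (∏ j, (if j ∈ s then q j else 1 - q j)) =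
          (4/9 : ℝ) ^ s.card * ∏ j, (if j ∈ s then (9/4 : ℝ) * q j else 1 - q j) := by
        calc (∏ j, (if j ∈ s then q j else 1 - q j))
            = ∏ j, ((if j ∈ s then (4/9 : ℝ) else 1) *
                (if j ∈ s then (9/4 : ℝ) * q j else 1 - q j)) := by
              refine Finset.prod_congr rfl fun j _ => ?_
              by_cases h : j ∈ s
              · rw [if_pos h, if_pos h, if_pos h]; ring
              · rw [if_neg h, if_neg h, if_neg h]; ring
          _ = (∏ j, (if j ∈ s then (4/9 : ℝ) else 1)) *
                ∏ j, (if j ∈ s then (9/4 : ℝ) * q j else 1 - q j) :=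
              Finset.prod_mul_distrib
          _ = (4/9 : ℝ) ^ s.card *
                ∏ j, (if j ∈ s then (9/4 : ℝ) * q j else 1 - q j) := by
              rw [Finset.prod_ite_mem, Finset.univ_inter, Finset.prod_const]
      rw [hsplit]
      refine mul_le_mul_of_nonneg_right ?_
        (Finset.prod_nonneg fun j _ => hfac_nonneg s j)
      calc (4/9 : ℝ) ^ s.card = ((2/3 : ℝ) ^ 2) ^ s.card := by norm_num
        _ = (2/3 : ℝ) ^ (2 * s.card) := by rw [← pow_mul]
        _ ≤ (2/3 : ℝ) ^ g :=
            pow_le_pow_of_le_one (by norm_num) (by norm_num) hcard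
    have step3 : (∑ s ∈ (Finset.univ : Finset (Finset (Fin g))),
        ∏ j, (if j ∈ s then (9/4 : ℝ) * q j else 1 - q j)) =
        ∏ j, ((9/4 : ℝ) * q j + (1 - q j)) := by
      rw [Finset.prod_add]
      rw [← Finset.powerset_univ]
      refine Finset.sum_congr rfl fun s hs => ?_
      rw [Finset.prod_ite]
      congr 1
      · congr 1
        ext j; simp
      · congr 1
        ext j; simp
    have step4 : (∏ j : Fin g, ((9/4 : ℝ) * q j + (1 - q j))) ≤ (23/18 : ℝ) ^ g := by
      calc (∏ j : Fin g, ((9/4 : ℝ) * q j + (1 - q j)))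
          ≤ ∏ _j : Fin g, (23/18 : ℝ) := by
            refine Finset.prod_le_prod (fun j _ => ?_) (fun j _ => ?_)
            · have := hq0 j; have := hq1 j; nlinarith
            · have := hq29 j; linarith
        _ = (23/18 : ℝ) ^ g := by
            rw [Finset.prod_const, Finset.card_univ, Fintype.card_fin]
    calc (∑ s ∈ 𝒮, ∏ j, (if j ∈ s then q j else 1 - q j))
        ≤ ∑ s ∈ 𝒮, (2/3 : ℝ) ^ g *
            ∏ j, (if j ∈ s then (9/4 : ℝ) * q j else 1 - q j) :=
          Finset.sum_le_sum step1
      _ = (2/3 : ℝ) ^ g * ∑ s ∈ 𝒮,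
            ∏ j, (if j ∈ s then (9/4 : ℝ) * q j else 1 - q j) := by
          rw [Finset.mul_sum]
      _ ≤ (2/3 : ℝ) ^ g * ∑ s ∈ (Finset.univ : Finset (Finset (Fin g))),
            ∏ j, (if j ∈ s then (9/4 : ℝ) * q j else 1 - q j) := by
          refine mul_le_mul_of_nonneg_left ?_ (by positivity)
          refine Finset.sum_le_sum_of_subset_of_nonneg (Finset.filter_subset _ _)
            fun s _ _ => Finset.prod_nonneg fun j _ => hfac_nonneg s j
      _ ≤ (2/3 : ℝ) ^ g * (23/18 : ℝ) ^ g := by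
          rw [step3]
          exact mul_le_mul_of_nonneg_left step4 (by positivity)
      _ = (23/27 : ℝ) ^ g := by rw [← mul_pow]; norm_num
      _ ≤ δ := by
          have h78 : (23/27 : ℝ) ≤ Real.exp (-(1/8)) := by
            have := Real.add_one_le_exp (-(1/8) : ℝ)
            linarith
          have hpow : (23/27 : ℝ) ^ g ≤ Real.exp (-(1/8)) ^ g :=
            pow_le_pow_left₀ (by norm_num) h78 g
          have hexp : Real.exp (-(1/8)) ^ g = Real.exp (Real.log δ) := by
            rw [← Real.exp_nat_mul]
            congr 1
            have hlog : Real.log (1/δ) = - Real.log δ := by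
              rw [one_div, Real.log_inv]
            have : (g : ℝ) = 8 * (- Real.log δ) := by rw [hgδ, hlog]
            rw [this]; ring
          rw [hexp, Real.exp_log hδ0] at hpow
          exact hpow
  -- assembling
  set Bad : Set Ω := ⋃ s ∈ 𝒮, Atom s with hBaddef
  have hAtomMeas : ∀ s, MeasurableSet (Atom s) := by
    intro s
    refine MeasurableSet.biInter (Finset.countable_toSet _) fun j _ => ?_
    by_cases h : j ∈ s
    · rw [if_pos h]; exact hCmeas j
    · rw [if_neg h]; exact (hCmeas j).compl
  have hBadMeas : MeasurableSet Bad :=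
    MeasurableSet.biUnion (Finset.countable_toSet _) fun s _ => hAtomMeas s
  have hPBad : P Bad ≤ ENNReal.ofReal δ := by
    calc P Bad ≤ ∑ s ∈ 𝒮, P (Atom s) := measure_biUnion_finset_le _ _
      _ = ENNReal.ofReal (∑ s ∈ 𝒮, ∏ j, (if j ∈ s then q j else 1 - q j)) := by
          rw [ENNReal.ofReal_sum_of_nonneg fun s _ => Finset.prod_nonneg fun j _ => by
            by_cases h : j ∈ s
            · rw [if_pos h]; exact hq0 j
            · rw [if_neg h]; linarith [hq1 j]]
          exact Finset.sum_congr rfl fun s _ => hAtomP s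
      _ ≤ ENNReal.ofReal δ := ENNReal.ofReal_le_ofReal hreal
  have hcompl : Badᶜ ⊆ {ω | |Zq ω - c| ≤ t} := by
    intro ω hω
    have hnot : ¬ (g ≤ 2 * (Finset.univ.filter fun j => t < |Y j ω - c|).card) := by
      intro hcnt
      apply hω
      refine Set.mem_biUnion (?_ : (Finset.univ.filter fun j => t < |Y j ω - c|) ∈ 𝒮) ?_
      · exact Finset.mem_filter.mpr ⟨Finset.mem_univ _, hcnt⟩
      · refine Set.mem_iInter₂.mpr fun j _ => ?_
        by_cases hj : j ∈ Finset.univ.filter fun j => t < |Y j ω - c|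
        · rw [if_pos hj]
          exact (Finset.mem_filter.mp hj).2
        · rw [if_neg hj]
          exact fun h => hj (Finset.mem_filter.mpr ⟨Finset.mem_univ _, h⟩)
    by_contra habs
    have ht' : t < |Zq ω - c| := not_le.mp habs
    rcases lt_abs.mp ht' with h | h
    · have hsub : (Finset.univ.filter fun j => Zq ω ≤ Y j ω) ⊆
          (Finset.univ.filter fun j => t < |Y j ω - c|) := by
        intro j hj
        rw [Finset.mem_filter] at hj ⊢
        refine ⟨hj.1, lt_of_lt_of_le ?_ (le_abs_self _)⟩
        linarith [hj.2]
      exact hnot (le_trans (hmed_ge ω)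
        (Nat.mul_le_mul_left 2 (Finset.card_le_card hsub)))
    · have hsub : (Finset.univ.filter fun j => Y j ω ≤ Zq ω) ⊆
          (Finset.univ.filter fun j => t < |Y j ω - c|) := by
        intro j hj
        rw [Finset.mem_filter] at hj ⊢
        refine ⟨hj.1, lt_of_lt_of_le ?_ (neg_le_abs _)⟩
        linarith [hj.2]
      exact hnot (le_trans (hmed_le ω)
        (Nat.mul_le_mul_left 2 (Finset.card_le_card hsub)))
  calc ENNReal.ofReal (1 - δ) = 1 - ENNReal.ofReal δ := by
        rw [ENNReal.ofReal_sub 1 hδ0.le, ENNReal.ofReal_one]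
    _ ≤ 1 - P Bad := tsub_le_tsub_left hPBad 1
    _ = P Badᶜ := (prob_compl_eq_one_sub hBadMeas).symm
    _ ≤ P {ω | |Zq ω - c| ≤ t} := measure_mono hcompl
end
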